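/- arXiv:0806.0176 — 6 statements merged into one kernel-verified Lean document; each statement's English description precedes it below -/
import Mathlib

section
/- In the ring C := k[x_n : n ∈ ℤ]/(x_n² + n − x_m² − m), for finite subsets I, J, I', J' of ℤ we have x_I x_J = x_{I'} x_{J'} if and only if I ∩ J = I' ∩ J' and I ∪ J = I' ∪ J'. -/
/-!
Sending `x_n` to a square root of `t - n` in an algebraic closure of `k(t)` defines a ring map
under which `(∏_{n ∈ s} x_n)²` becomes `∏_{n ∈ s} (t - n)` for every multiset `s ⊆ ℤ`. In
characteristic zero this polynomial has root multiset `s`, so `∏_{n ∈ s} x_n` determines `s`.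
Now `x_I x_J` is this product for the multiset `I + J`, whose support is `I ∪ J` and whose
elements of multiplicity two form `I ∩ J`.
-/

open scoped symmDiff

noncomputable section

/-- The ring `C = k[x_n : n ∈ ℤ] / (x_n² + n = x_m² + m)`. -/
abbrev WeylC (k : Type) [Field k] : Type :=
  MvPolynomial ℤ k ⧸ Ideal.span { p : MvPolynomial ℤ k |
    ∃ m n : ℤ, p = MvPolynomial.X n ^ 2 + (n : MvPolynomial ℤ k)
      - MvPolynomial.X m ^ 2 - (m : MvPolynomial ℤ k) }

variable (k : Type) [Field k]

/-- The generator `x_n` of `C`. -/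
def xC (n : ℤ) : WeylC k := Ideal.Quotient.mk _ (MvPolynomial.X n)

/-- `x_I := ∏_{i ∈ I} x_i` for a finite subset `I ⊆ ℤ` (with `x_∅ = 1`). -/
def xS (I : Finset ℤ) : WeylC k := ∏ i ∈ I, xC k i

/-- The identity component `C_∅ = k[x_0²]`. -/
def Cphi : Subalgebra k (WeylC k) := Algebra.adjoin k {xC k 0 ^ 2}

/-- The homogeneous component `C_I = C_∅ · x_I` of the `ℤ_fin`-grading on `C`. -/
def Cgrade (I : Finset ℤ) : Submodule k (WeylC k) :=
  (Cphi k).toSubmodule.map (LinearMap.mulRight k (xS k I))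

theorem Finset.val_add_val_eq_iff {α : Type*} [DecidableEq α] {I J I' J' : Finset α} :
    I.val + J.val = I'.val + J'.val ↔ I ∩ J = I' ∩ J' ∧ I ∪ J = I' ∪ J' := by
  have add_eq (I J : Finset α) : I.val + J.val = (I ∪ J).val + (I ∩ J).val := by
    rw [Finset.union_val, Finset.inter_val, Multiset.union_add_inter]
  have union_eq (I J : Finset α) : (I ∪ J).val = (I.val + J.val).dedup := by
    rw [Multiset.dedup_add, J.nodup.dedup, Finset.union_val_nd]
  refine ⟨fun h => ?_, fun ⟨hi, hu⟩ => by rw [add_eq, add_eq I', hi, hu]⟩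
  have hu : I ∪ J = I' ∪ J' := Finset.val_injective (by rw [union_eq, union_eq, h])
  rw [add_eq, add_eq I', hu] at h
  exact ⟨Finset.val_injective (add_left_cancel h), hu⟩

namespace Polynomial

theorem multiset_prod_X_sub_C_injective {R α : Type*} [CommRing R] [IsDomain R]
    {f : α → R} (hf : Function.Injective f) :
    Function.Injective fun s : Multiset α => (s.map fun a => X - C (f a)).prod := by
  have roots_eq (s : Multiset α) : (s.map fun a => X - C (f a)).prod.roots = s.map f := by
    simpa only [Multiset.map_map, Function.comp_def] using roots_multiset_prod_X_sub_C (s.map f)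
  intro s t (h : (s.map fun a => X - C (f a)).prod = (t.map fun a => X - C (f a)).prod)
  have h_roots := congrArg roots h
  rw [roots_eq, roots_eq] at h_roots
  exact Multiset.map_injective hf h_roots

theorem algebraMap_algebraicClosure_ratFunc_injective (K : Type*) [Field K] :
    Function.Injective (algebraMap K[X] (AlgebraicClosure (RatFunc K))) := by
  rw [IsScalarTower.algebraMap_eq K[X] (RatFunc K)]
  exact (algebraMap (RatFunc K) _).injective.comp (IsFractionRing.injective _ _)

end Polynomial

namespace WeylC

open Polynomial

def lift {K : Type*} [CommRing K] [Algebra k K] (r : ℤ → K)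
    (hr : ∀ m n : ℤ, r n ^ 2 + n = r m ^ 2 + m) : WeylC k →ₐ[k] K :=
  Ideal.Quotient.liftₐ _ (MvPolynomial.aeval r) fun _ hp =>
    Ideal.span_le (I := RingHom.ker (MvPolynomial.aeval r)).mpr
      (by rintro _ ⟨m, n, rfl⟩; simp [hr m n]) hp

theorem lift_xC {K : Type*} [CommRing K] [Algebra k K] (r : ℤ → K)
    (hr : ∀ m n : ℤ, r n ^ 2 + n = r m ^ 2 + m) (n : ℤ) : lift k r hr (xC k n) = r n :=
  MvPolynomial.aeval_X r n

def sqrtXSub (n : ℤ) : AlgebraicClosure (RatFunc k) :=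
  (IsAlgClosed.exists_pow_nat_eq (algebraMap k[X] _ (X - C (n : k))) two_pos).choose

theorem sqrtXSub_sq (n : ℤ) : sqrtXSub k n ^ 2 = algebraMap k[X] _ (X - C (n : k)) :=
  (IsAlgClosed.exists_pow_nat_eq _ two_pos).choose_spec

def toAlgClosure : WeylC k →ₐ[k] AlgebraicClosure (RatFunc k) :=
  lift k (sqrtXSub k) fun m n => by simp [sqrtXSub_sq]

theorem toAlgClosure_prod_xC_sq (s : Multiset ℤ) :
    toAlgClosure k (s.map (xC k)).prod ^ 2
      = algebraMap k[X] _ (s.map fun n : ℤ => X - C (n : k)).prod := by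
  simp only [map_multiset_prod, Multiset.map_map, Function.comp_def, ← Multiset.prod_map_pow,
    toAlgClosure, lift_xC, sqrtXSub_sq]

theorem prod_xC_injective [CharZero k] :
    Function.Injective fun s : Multiset ℤ => (s.map (xC k)).prod := by
  intro s t (h : (s.map (xC k)).prod = (t.map (xC k)).prod)
  apply multiset_prod_X_sub_C_injective (Int.cast_injective (α := k))
  apply algebraMap_algebraicClosure_ratFunc_injective k
  rw [← toAlgClosure_prod_xC_sq, ← toAlgClosure_prod_xC_sq, h]

theorem xS_mul_xS (I J : Finset ℤ) : xS k I * xS k J = ((I.val + J.val).map (xC k)).prod := by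
  rw [Multiset.map_add, Multiset.prod_add]
  rfl

end WeylC

variable [CharZero k]

/-- In `C`, `x_I x_J = x_{I'} x_{J'}` if and only if
`I ∩ J = I' ∩ J'` and `I ∪ J = I' ∪ J'`. -/
theorem xS_mul_eq_iff (I J I' J' : Finset ℤ) :
    xS k I * xS k J = xS k I' * xS k J' ↔ I ∩ J = I' ∩ J' ∧ I ∪ J = I' ∪ J' := by
  rw [WeylC.xS_mul_xS, WeylC.xS_mul_xS, (WeylC.prod_xC_injective k).eq_iff,
    Finset.val_add_val_eq_iff]
end
end

section
/- In the ℤ_fin-graded ring C, for finite subsets I, J of ℤ, the ideal sum satisfies Cx_I + Cx_J = Cx_{I∩J}. -/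
/-!
Since `x_m² - x_n² = n - m` is a nonzero scalar, hence a unit, for `m ≠ n`, the generators
`x_m`, `x_n` are coprime, and so are `x_A`, `x_B` for disjoint `A`, `B`. Writing
`x_I = x_{I∩J} x_{I∖J}` and `x_J = x_{I∩J} x_{J∖I}`, the ideal `(x_I, x_J)` is
`x_{I∩J} · (x_{I∖J}, x_{J∖I}) = x_{I∩J} · C`.
-/

open scoped symmDiff

noncomputable section

variable (k : Type) [Field k]

variable [CharZero k]

theorem isCoprime_of_isUnit_sub {R : Type*} [CommRing R] {a b : R} (h : IsUnit (a - b)) :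
    IsCoprime a b := by
  obtain ⟨u, hu⟩ := h.exists_left_inv
  exact ⟨u, -u, by rw [← hu]; ring⟩

theorem Ideal.span_singleton_mul_sup_span_singleton_mul {R : Type*} [CommRing R] {a b : R}
    (d : R) (h : IsCoprime a b) :
    Ideal.span {d * a} ⊔ Ideal.span {d * b} = Ideal.span {d} := by
  have hab : Ideal.span {a} ⊔ Ideal.span {b} = ⊤ :=
    Ideal.isCoprime_iff_sup_eq.1 ((Ideal.isCoprime_span_singleton_iff a b).2 h)
  rw [← Ideal.span_singleton_mul_span_singleton, ← Ideal.span_singleton_mul_span_singleton,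
    ← Ideal.mul_sup, hab, Ideal.mul_top]

omit [CharZero k] in
theorem xC_sq_sub_xC_sq (m n : ℤ) : xC k m ^ 2 - xC k n ^ 2 = (n - m : ℤ) := by
  have hrel : (Ideal.Quotient.mk _ (MvPolynomial.X m ^ 2 + (m : MvPolynomial ℤ k)
      - MvPolynomial.X n ^ 2 - (n : MvPolynomial ℤ k)) : WeylC k) = 0 :=
    Ideal.Quotient.eq_zero_iff_mem.2 (Ideal.subset_span ⟨n, m, rfl⟩)
  simp only [map_sub, map_add, map_pow, map_intCast] at hrel
  rw [xC, xC]
  push_cast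
  linear_combination hrel

theorem isUnit_intCast_weylC {n : ℤ} (hn : n ≠ 0) : IsUnit (n : WeylC k) := by
  rw [← map_intCast (algebraMap k (WeylC k))]
  exact (Int.cast_ne_zero.2 hn).isUnit.map _

theorem isCoprime_xC {m n : ℤ} (hmn : m ≠ n) : IsCoprime (xC k m) (xC k n) := by
  refine (IsCoprime.pow_iff two_pos two_pos).1 (isCoprime_of_isUnit_sub ?_)
  rw [xC_sq_sub_xC_sq]
  exact isUnit_intCast_weylC k (sub_ne_zero.2 hmn.symm)

theorem isCoprime_xS_of_disjoint {A B : Finset ℤ} (h : Disjoint A B) :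
    IsCoprime (xS k A) (xS k B) :=
  IsCoprime.prod_left fun _ ha => IsCoprime.prod_right fun _ hb =>
    isCoprime_xC k (h.forall_ne_finset ha hb)

omit [CharZero k] in
theorem xS_inter_mul_xS_sdiff (I J : Finset ℤ) : xS k (I ∩ J) * xS k (I \ J) = xS k I :=
  Finset.prod_inter_mul_prod_sdiff I J _

/-- In `C`, the sum of the principal (graded) ideals satisfies
`Cx_I + Cx_J = Cx_{I∩J}`. -/
theorem ideal_sum_eq (I J : Finset ℤ) :
    Ideal.span {xS k I} ⊔ Ideal.span {xS k J} = Ideal.span {xS k (I ∩ J)} := by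
  rw [← xS_inter_mul_xS_sdiff k I J, ← xS_inter_mul_xS_sdiff k J I, Finset.inter_comm J I]
  exact Ideal.span_singleton_mul_sup_span_singleton_mul _
    (isCoprime_xS_of_disjoint k disjoint_sdiff_sdiff)
end
end

section
/- Every graded ideal of the ℤ_fin-graded ring C is generated by a single homogeneous element; that is, C is a graded principal ideal domain. -/
open scoped symmDiff

noncomputable section

variable (k : Type) [Field k]

/-- An element of `C` is homogeneous if it lies in some component `C_I = C_∅ x_I`
of the `ℤ_fin`-grading. -/
def IsHomogC (c : WeylC k) : Prop := ∃ I : Finset ℤ, c ∈ Cgrade k I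

open Polynomial Lagrange

/-!
Write `φ = ofPoly k : k[X] → C` for the algebra map `X ↦ x₀²`. Then `x_n² = φ(X - n)`, so
`x_I x_J = φ(∏_{i ∈ I ∩ J} (X - i)) x_{I ∆ J}`, and the homogeneous elements are the `φ(g) x_J`.
An ideal `𝔞` is seen through its slices `{g | φ(g) x_J ∈ 𝔞}`, ideals of `k[X]`.

Pick a nonzero `φ(f) x_I ∈ 𝔞` of least degree in the generators `x_n`. By induction on
`|J ∆ I|`, every `g` in the slice at `J` is divisible by `f · ∏_{i ∈ I \ J} (X - i)`, which
makes `φ(g) x_J` a multiple of `φ(f) x_I`. In the inductive step, multiplying by `x_n` for some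
`n ∈ J ∆ I` moves `g` one step towards `I`; if divisibility by `X - n` were lost on the way,
a Bézout combination with `X - n`, which is coprime to every `X - m` for `m ≠ n` in
characteristic zero, would produce a nonzero element of `𝔞` of smaller degree.
-/

theorem Lagrange.nodal_singleton {R ι : Type*} [CommRing R] (i : ι) (v : ι → R) :
    nodal {i} v = X - C (v i) := by
  simp [nodal]

theorem Ideal.mem_of_mul_mem_of_isCoprime {R : Type*} [CommRing R] {𝔟 : Ideal R} {a p q : R}
    (hpq : IsCoprime p q) (hp : a * p ∈ 𝔟) (hq : a * q ∈ 𝔟) : a ∈ 𝔟 := by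
  obtain ⟨u, v, huv⟩ := hpq
  have ha : a = u * (a * p) + v * (a * q) := by linear_combination -a * huv
  rw [ha]
  exact 𝔟.add_mem (𝔟.mul_mem_left u hp) (𝔟.mul_mem_left v hq)

def ofPoly : k[X] →ₐ[k] WeylC k := aeval (xC k 0 ^ 2)

section

variable {k}

def homog (g : k[X]) (J : Finset ℤ) : WeylC k := ofPoly k g * xS k J

/-- The degree of `homog g J` in the generators `x_n`, recalling `φ(X) = x₀²`. -/
def weight (g : k[X]) (J : Finset ℤ) : ℕ := 2 * g.natDegree + J.card

def slice (𝔞 : Ideal (WeylC k)) (J : Finset ℤ) : Ideal k[X] where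
  carrier := {g | homog g J ∈ 𝔞}
  add_mem' {g h} hg hh := by
    change ofPoly k (g + h) * xS k J ∈ 𝔞
    rw [map_add, add_mul]
    exact 𝔞.add_mem hg hh
  zero_mem' := by
    change ofPoly k 0 * xS k J ∈ 𝔞
    simp
  smul_mem' p g hg := by
    change ofPoly k (p * g) * xS k J ∈ 𝔞
    rw [map_mul, mul_assoc]
    exact 𝔞.mul_mem_left _ hg

theorem xC_mul_self (n : ℤ) : xC k n * xC k n = ofPoly k (X - C (n : k)) := by
  have hrel : (Ideal.Quotient.mk _ (MvPolynomial.X n * MvPolynomial.X n) : WeylC k) =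
      Ideal.Quotient.mk _ (MvPolynomial.X 0 ^ 2 - (n : MvPolynomial ℤ k)) := by
    rw [Ideal.Quotient.eq]
    exact Ideal.subset_span ⟨0, n, by push_cast; ring⟩
  rw [xC, ← map_mul, hrel, ofPoly, map_sub, map_pow, map_intCast, map_sub, aeval_X, aeval_C,
    map_intCast, xC]

theorem xS_mul_xS (I J : Finset ℤ) :
    xS k I * xS k J = ofPoly k (nodal (I ∩ J) Int.cast) * xS k (I ∆ J) := by
  have hsq : xS k (I ∩ J) * xS k (I ∩ J) = ofPoly k (nodal (I ∩ J) Int.cast) := by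
    rw [xS, ← Finset.prod_mul_distrib, nodal, map_prod]
    exact Finset.prod_congr rfl fun i _ => xC_mul_self i
  have hsplit (A B : Finset ℤ) : xS k A = xS k (A \ B) * xS k (A ∩ B) := by
    rw [xS, xS, xS, ← Finset.prod_union (Finset.disjoint_sdiff_inter A B),
      Finset.sdiff_union_inter]
  have hsymm : xS k (I ∆ J) = xS k (I \ J) * xS k (J \ I) := by
    rw [xS, xS, xS, ← Finset.prod_union disjoint_sdiff_sdiff, Finset.symmDiff_def]
  rw [hsplit I J, hsplit J I, Finset.inter_comm J I, hsymm, ← hsq]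
  ring

theorem ofPoly_mul_homog (p g : k[X]) (J : Finset ℤ) :
    ofPoly k p * homog g J = homog (p * g) J := by
  rw [homog, homog, map_mul, mul_assoc]

theorem homog_mul_xS (g : k[X]) (J K : Finset ℤ) :
    homog g J * xS k K = homog (g * nodal (J ∩ K) Int.cast) (J ∆ K) := by
  rw [homog, homog, mul_assoc, xS_mul_xS, map_mul, mul_assoc]

theorem homog_mul_xS_symmDiff (g : k[X]) (J M : Finset ℤ) :
    homog g J * xS k (J ∆ M) = homog (g * nodal (J \ M) Int.cast) M := by
  have hJ : J ∩ J ∆ M = J \ M := by ext; simp [Finset.mem_symmDiff]; tauto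
  rw [homog_mul_xS, symmDiff_symmDiff_cancel_left, hJ]

theorem isHomogC_iff {c : WeylC k} : IsHomogC k c ↔ ∃ g J, c = homog g J := by
  simp only [IsHomogC, Cgrade, Cphi, Submodule.mem_map, Algebra.adjoin_singleton_eq_range_aeval]
  constructor
  · rintro ⟨J, _, ⟨g, rfl⟩, rfl⟩
    exact ⟨g, J, rfl⟩
  · rintro ⟨g, J, rfl⟩
    exact ⟨J, _, ⟨g, rfl⟩, rfl⟩

theorem homog_mem_span_of_dvd {f g : k[X]} {I J : Finset ℤ}
    (h : f * nodal (I \ J) Int.cast ∣ g) :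
    homog g J ∈ Ideal.span {homog f I} := by
  obtain ⟨q, rfl⟩ := h
  refine Ideal.mem_span_singleton.2 ⟨ofPoly k q * xS k (I ∆ J), ?_⟩
  rw [mul_left_comm, homog_mul_xS_symmDiff, ofPoly_mul_homog, mul_comm q]

theorem mem_slice {𝔞 : Ideal (WeylC k)} {g : k[X]} {J : Finset ℤ} :
    g ∈ slice 𝔞 J ↔ homog g J ∈ 𝔞 := Iff.rfl

theorem mul_nodal_sdiff_mem_slice {𝔞 : Ideal (WeylC k)} {g : k[X]} {J : Finset ℤ}
    (hg : g ∈ slice 𝔞 J) (M : Finset ℤ) : g * nodal (J \ M) Int.cast ∈ slice 𝔞 M := by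
  rw [mem_slice, ← homog_mul_xS_symmDiff]
  exact 𝔞.mul_mem_right _ hg

structure IsMinWeight (𝔞 : Ideal (WeylC k)) (f : k[X]) (I : Finset ℤ) : Prop where
  ne_zero : f ≠ 0
  mem_slice : f ∈ slice 𝔞 I
  eq_zero_of_weight_lt {g : k[X]} {J : Finset ℤ} :
    g ∈ slice 𝔞 J → weight g J < weight f I → g = 0

theorem exists_isMinWeight {𝔞 : Ideal (WeylC k)} (h : ∃ g J, g ≠ 0 ∧ g ∈ slice 𝔞 J) :
    ∃ f I, IsMinWeight 𝔞 f I := by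
  classical
  have hw : ∃ w, ∃ g J, g ≠ 0 ∧ g ∈ slice 𝔞 J ∧ weight g J = w :=
    let ⟨g, J, hg, hgJ⟩ := h
    ⟨_, g, J, hg, hgJ, rfl⟩
  obtain ⟨f, I, hf, hfI, hfw⟩ := Nat.find_spec hw
  refine ⟨f, I, hf, hfI, fun {g J} hgJ hlt => by_contra fun hg => ?_⟩
  exact Nat.find_min hw (hfw ▸ hlt) ⟨g, J, hg, hgJ, rfl⟩

theorem IsMinWeight.dvd_of_mem_slice_self {𝔞 : Ideal (WeylC k)} {f : k[X]} {I : Finset ℤ}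
    (hmin : IsMinWeight 𝔞 f I) {g : k[X]} (hg : g ∈ slice 𝔞 I) : f ∣ g := by
  rw [← EuclideanDomain.mod_eq_zero]
  by_contra hr
  have hmem : g % f ∈ slice 𝔞 I := by
    rw [EuclideanDomain.mod_eq_sub_mul_div]
    exact sub_mem hg (Ideal.mul_mem_right _ _ hmin.mem_slice)
  have hdeg := natDegree_lt_natDegree hr (degree_mod_lt g hmin.ne_zero)
  exact hr (hmin.eq_zero_of_weight_lt hmem (by unfold weight; omega))

end

variable [CharZero k]

section

variable {k}

theorem X_sub_C_dvd_nodal_iff {n : ℤ} {S : Finset ℤ} :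
    X - C (n : k) ∣ nodal S Int.cast ↔ n ∈ S := by
  rw [dvd_iff_isRoot, IsRoot.def, eval_nodal, Finset.prod_eq_zero_iff]
  simp [sub_eq_zero]

namespace IsMinWeight

variable {𝔞 : Ideal (WeylC k)} {f : k[X]} {I : Finset ℤ}

theorem dvd_of_dvd_mul_X_sub_C (hmin : IsMinWeight 𝔞 f I) {g : k[X]} {J : Finset ℤ} {n : ℤ}
    (hnI : n ∉ I) (hg : g ∈ slice 𝔞 J)
    (h : f * nodal (I \ J) Int.cast ∣ g * (X - C (n : k))) :
    f * nodal (I \ J) Int.cast ∣ g := by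
  set P := X - C (n : k)
  have hP : Prime P := prime_X_sub_C _
  obtain ⟨v, hv⟩ := h
  suffices hPv : P ∣ v by
    obtain ⟨w, rfl⟩ := hPv
    exact ⟨w, mul_right_cancel₀ hP.ne_zero (by rw [hv]; ring)⟩
  -- Otherwise `X - n ∣ f`, and `f / (X - n)` lies in the slice at `insert n I`, of smaller weight.
  by_contra hPv
  have hPπ : ¬ P ∣ nodal (I \ J) Int.cast := by
    rw [X_sub_C_dvd_nodal_iff, Finset.mem_sdiff]
    exact fun h => hnI h.1
  have hPf : P ∣ f := by
    have : P ∣ f * nodal (I \ J) Int.cast * v := hv ▸ dvd_mul_left P g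
    exact (hP.dvd_or_dvd ((hP.dvd_or_dvd this).resolve_right hPv)).resolve_right hPπ
  obtain ⟨f', rfl⟩ := hPf
  have hf' : f' ≠ 0 := right_ne_zero_of_mul hmin.ne_zero
  have hg' : g = f' * (nodal (I \ J) Int.cast * v) :=
    mul_right_cancel₀ hP.ne_zero (by rw [hv]; ring)
  have h1 : f' * P ∈ slice 𝔞 (insert n I) := by
    have := mul_nodal_sdiff_mem_slice hmin.mem_slice (insert n I)
    rwa [Finset.sdiff_eq_empty_iff_subset.2 (Finset.subset_insert n I), nodal_empty, mul_one,
      mul_comm] at this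
  have h2 : f' * (nodal (I \ J) Int.cast * v * nodal (J \ insert n I) Int.cast) ∈
      slice 𝔞 (insert n I) := by
    convert mul_nodal_sdiff_mem_slice hg (insert n I) using 1
    rw [hg']
    ring
  have hw : ¬ P ∣ nodal (I \ J) Int.cast * v * nodal (J \ insert n I) Int.cast :=
    hP.not_dvd_mul (hP.not_dvd_mul hPπ hPv) (X_sub_C_dvd_nodal_iff.not.2 (by simp))
  have hf'mem := Ideal.mem_of_mul_mem_of_isCoprime (hP.coprime_iff_not_dvd.2 hw) h1 h2
  refine hf' (hmin.eq_zero_of_weight_lt hf'mem ?_)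
  unfold weight
  rw [natDegree_mul hP.ne_zero hf', natDegree_X_sub_C, Finset.card_insert_of_notMem hnI]
  omega

theorem dvd_of_dvd_insert (hmin : IsMinWeight 𝔞 f I) {g : k[X]} {J : Finset ℤ} {n : ℤ}
    (hnI : n ∈ I) (hnJ : n ∉ J) (hg : g ∈ slice 𝔞 J)
    (h : f * nodal (I \ insert n J) Int.cast ∣ g) :
    f * nodal (I \ J) Int.cast ∣ g := by
  set P := X - C (n : k)
  have hP : Prime P := prime_X_sub_C _
  have hIJ : nodal (I \ J) Int.cast = P * nodal (I \ insert n J) Int.cast := by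
    rw [Finset.sdiff_insert, nodal_eq_mul_nodal_erase (Finset.mem_sdiff.2 ⟨hnI, hnJ⟩)]
  obtain ⟨v, rfl⟩ := h
  suffices hPv : P ∣ v by
    obtain ⟨w, rfl⟩ := hPv
    exact ⟨w, by rw [hIJ]; ring⟩
  -- Otherwise `f` lies in the slice at `I.erase n`, of smaller weight.
  by_contra hPv
  have h1 : f * P ∈ slice 𝔞 (I.erase n) := by
    have := mul_nodal_sdiff_mem_slice hmin.mem_slice (I.erase n)
    rwa [Finset.sdiff_erase_self hnI, nodal_singleton] at this
  have h2 : f * (nodal (I \ insert n J) Int.cast * v * nodal (J \ I.erase n) Int.cast) ∈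
      slice 𝔞 (I.erase n) := by
    convert mul_nodal_sdiff_mem_slice hg (I.erase n) using 1
    ring
  have hw : ¬ P ∣ nodal (I \ insert n J) Int.cast * v * nodal (J \ I.erase n) Int.cast :=
    hP.not_dvd_mul (hP.not_dvd_mul (X_sub_C_dvd_nodal_iff.not.2 (by simp)) hPv)
      (X_sub_C_dvd_nodal_iff.not.2 (by simp [hnJ]))
  have hfmem := Ideal.mem_of_mul_mem_of_isCoprime (hP.coprime_iff_not_dvd.2 hw) h1 h2
  refine hmin.ne_zero (hmin.eq_zero_of_weight_lt hfmem ?_)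
  unfold weight
  rw [Finset.card_erase_of_mem hnI]
  have := Finset.card_pos.2 ⟨n, hnI⟩
  omega

theorem dvd_of_mem_slice (hmin : IsMinWeight 𝔞 f I) {g : k[X]} {J : Finset ℤ}
    (hg : g ∈ slice 𝔞 J) : f * nodal (I \ J) Int.cast ∣ g := by
  by_cases hJI : ∃ n ∈ J, n ∉ I
  · obtain ⟨n, hnJ, hnI⟩ := hJI
    have ih := hmin.dvd_of_mem_slice (mul_nodal_sdiff_mem_slice hg (J.erase n))
    rw [Finset.sdiff_erase_self hnJ, nodal_singleton, show I \ J.erase n = I \ J by grind] at ih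
    exact hmin.dvd_of_dvd_mul_X_sub_C hnI hg ih
  by_cases hIJ : ∃ n ∈ I, n ∉ J
  · obtain ⟨n, hnI, hnJ⟩ := hIJ
    have ih := hmin.dvd_of_mem_slice (mul_nodal_sdiff_mem_slice hg (insert n J))
    rw [Finset.sdiff_eq_empty_iff_subset.2 (Finset.subset_insert n J), nodal_empty,
      mul_one] at ih
    exact hmin.dvd_of_dvd_insert hnI hnJ hg ih
  obtain rfl : J = I := by grind
  simpa using hmin.dvd_of_mem_slice_self hg
termination_by (J ∆ I).card
decreasing_by
  all_goals
    rw [show _ ∆ I = (J ∆ I).erase n by grind [Finset.mem_symmDiff]]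
    exact Finset.card_erase_lt_of_mem (by grind [Finset.mem_symmDiff])

end IsMinWeight

end

/-- Every graded ideal of the `ℤ_fin`-graded ring `C` (an ideal
generated by its homogeneous elements) is generated by a single homogeneous
element: `C` is a graded principal ideal domain. -/
theorem graded_ideal_principal (𝔞 : Ideal (WeylC k))
    (h : 𝔞 = Ideal.span {c : WeylC k | c ∈ 𝔞 ∧ IsHomogC k c}) :
    ∃ c : WeylC k, IsHomogC k c ∧ 𝔞 = Ideal.span {c} := by
  by_cases hex : ∃ g J, g ≠ 0 ∧ g ∈ slice 𝔞 J
  · obtain ⟨f, I, hmin⟩ := exists_isMinWeight hex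
    refine ⟨homog f I, isHomogC_iff.2 ⟨f, I, rfl⟩, le_antisymm ?_
      ((Ideal.span_singleton_le_iff_mem _).2 hmin.mem_slice)⟩
    rw [h, Ideal.span_le]
    rintro _ ⟨hc, hchom⟩
    obtain ⟨g, J, rfl⟩ := isHomogC_iff.1 hchom
    exact homog_mem_span_of_dvd (hmin.dvd_of_mem_slice hc)
  · refine ⟨0, ⟨∅, zero_mem _⟩, ?_⟩
    rw [Ideal.span_singleton_zero, h, Ideal.span_eq_bot]
    rintro _ ⟨hc, hchom⟩
    obtain ⟨g, J, rfl⟩ := isHomogC_iff.1 hchom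
    by_contra hne
    exact hex ⟨g, J, fun hg => hne (by rw [homog, hg, map_zero, zero_mul]), hc⟩
end
end

section
/- The ring C = k[x_n : n ∈ ℤ]/(x_n² + n = x_m² + m) is an integral domain. -/
/-!
Every element of the ideal of relations lies in the ideal `I_l` generated by the finitely many
relations `x_n² + n = x_0²`, `n ∈ l`, so it suffices that each `I_l` is prime (for `l` without
repetitions and `0 ∉ l`). Modulo `I_l` each `x_n`, `n ∈ l`, is a square root of `x_0² - n`, and
the quotient embeds, with `x_0 ↦ t`, into a polynomial ring (in the remaining variables) over the
tower `k[t][√(t² - n) : n ∈ l]`; the retraction comes from the universal property of the tower.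
This tower embeds into `k(t)(√(t² - n) : n ∈ l)`, which is a field: by induction on `l`, no
product of distinct `t² - j` with `j ≠ 0`, `j ∉ l` is a square, because an element of a field `F`
(of characteristic `≠ 2`) that becomes a square in `F(√d)` is a square or `d` times a square in
`F`, and in `k(t)` such a product is a squarefree nonconstant polynomial over the integrally
closed ring `k[t]`.
-/

noncomputable section

section

open Polynomial

variable {R S : Type*} [CommRing R] [CommRing S]

abbrev AdjoinSqrt (d : R) : Type _ := AdjoinRoot (X ^ 2 - C d)

namespace AdjoinSqrt

abbrev of (d : R) : R →+* AdjoinSqrt d := AdjoinRoot.of _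

abbrev sqrt (d : R) : AdjoinSqrt d := AdjoinRoot.root _

@[simp]
lemma sqrt_sq (d : R) : sqrt d ^ 2 = of d d := by
  have := AdjoinRoot.eval₂_root (X ^ 2 - C d)
  rwa [eval₂_sub, eval₂_X_pow, eval₂_C, sub_eq_zero] at this

lemma mk_C_add_C_mul_X (d a b : R) :
    AdjoinRoot.mk (X ^ 2 - C d) (C a + C b * X) = of d a + of d b * sqrt d := by
  simp [AdjoinRoot.mk_C, AdjoinRoot.mk_X]

lemma exists_eq_add_mul_sqrt [Nontrivial R] (d : R) (z : AdjoinSqrt d) :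
    ∃ a b : R, z = of d a + of d b * sqrt d := by
  obtain ⟨p, rfl⟩ := AdjoinRoot.mk_surjective z
  have hmonic := monic_X_pow_sub_C d two_ne_zero
  have hdeg : (p %ₘ (X ^ 2 - C d)).degree ≤ 1 := by
    have := degree_modByMonic_lt p hmonic
    rw [degree_X_pow_sub_C two_pos] at this
    exact Order.le_of_lt_succ this
  refine ⟨(p %ₘ (X ^ 2 - C d)).coeff 0, (p %ₘ (X ^ 2 - C d)).coeff 1, ?_⟩
  rw [← mk_C_add_C_mul_X, ← AdjoinRoot.mk_leftInverse hmonic (AdjoinRoot.mk _ p),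
    AdjoinRoot.modByMonicHom_mk, eq_X_add_C_of_degree_le_one hdeg]
  simp [add_comm]

lemma eq_zero_of_add_mul_sqrt_eq_zero [Nontrivial R] {d a b : R}
    (h : of d a + of d b * sqrt d = 0) : a = 0 ∧ b = 0 := by
  rw [← mk_C_add_C_mul_X, AdjoinRoot.mk_eq_zero] at h
  have hlin : C a + C b * X = 0 := by
    by_contra hne
    refine (monic_X_pow_sub_C d two_ne_zero).not_dvd_of_degree_lt hne ?_ h
    rw [degree_X_pow_sub_C two_pos]
    compute_degree!
  exact ⟨by simpa using congrArg (coeff · 0) hlin, by simpa using congrArg (coeff · 1) hlin⟩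

lemma of_injective [Nontrivial R] (d : R) : Function.Injective (of d) :=
  (injective_iff_map_eq_zero _).mpr fun a ha =>
    (eq_zero_of_add_mul_sqrt_eq_zero (b := 0) (by simpa using ha)).1

instance [Nontrivial R] (d : R) : Nontrivial (AdjoinSqrt d) := (of_injective d).nontrivial

lemma isField_of_not_isSquare {F : Type*} [Field F] {d : F} (hd : ¬IsSquare d) :
    IsField (AdjoinSqrt d) := by
  have : Fact (Irreducible (X ^ 2 - C d)) :=
    ⟨X_pow_sub_C_irreducible_of_prime Nat.prime_two fun b hb => hd ⟨b, by rw [← hb, sq]⟩⟩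
  exact Field.toIsField _

lemma isSquare_or_isSquare_mul_of_isSquare_of [IsDomain R] [NeZero (2 : R)] {d a : R}
    (h : IsSquare (of d a)) : IsSquare a ∨ IsSquare (a * d) := by
  obtain ⟨z, hz⟩ := h
  obtain ⟨x, y, rfl⟩ := exists_eq_add_mul_sqrt d z
  have hcoord : of d (a - (x ^ 2 + y ^ 2 * d)) + of d (-(2 * x * y)) * sqrt d = 0 := by
    simp only [map_sub, map_add, map_neg, map_mul, map_pow, map_ofNat, hz]
    linear_combination (of d y) ^ 2 * sqrt_sq d
  obtain ⟨ha, hxy⟩ := eq_zero_of_add_mul_sqrt_eq_zero hcoord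
  rw [sub_eq_zero] at ha
  rcases mul_eq_zero.mp (neg_eq_zero.mp hxy) with h2x | hy
  · rcases mul_eq_zero.mp h2x with h2 | hx
    · exact absurd h2 two_ne_zero
    · exact Or.inr ⟨y * d, by rw [ha, hx]; ring⟩
  · exact Or.inl ⟨x, by rw [ha, hy]; ring⟩

def map (g : R →+* S) {d : R} {e : S} (h : g d = e) : AdjoinSqrt d →+* AdjoinSqrt e :=
  AdjoinRoot.map g _ _ (by simp [h])

@[simp]
lemma map_of (g : R →+* S) {d : R} {e : S} (h : g d = e) (a : R) :
    map g h (of d a) = of e (g a) :=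
  AdjoinRoot.map_of _ _ _ _ a

@[simp]
lemma map_sqrt (g : R →+* S) {d : R} {e : S} (h : g d = e) : map g h (sqrt d) = sqrt e :=
  AdjoinRoot.map_root _ _ _ _

lemma map_injective [Nontrivial S] (g : R →+* S) (hg : Function.Injective g) {d : R} {e : S}
    {h : g d = e} : Function.Injective (map g h) := by
  have := g.domain_nontrivial
  refine (injective_iff_map_eq_zero _).mpr fun z hz => ?_
  obtain ⟨a, b, rfl⟩ := exists_eq_add_mul_sqrt d z
  simp only [map_add, map_mul, map_of, map_sqrt] at hz
  obtain ⟨ha, hb⟩ := eq_zero_of_add_mul_sqrt_eq_zero hz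
  simp [hg.eq_iff' (map_zero g) |>.mp ha, hg.eq_iff' (map_zero g) |>.mp hb]

end AdjoinSqrt

end

section

open Polynomial

lemma not_isSquare_algebraMap_of_squarefree {R K : Type*} [CommRing R] [IsDomain R]
    [IsIntegrallyClosed R] [Field K] [Algebra R K] [IsFractionRing R K] {p : R}
    (hp : Squarefree p) (hu : ¬IsUnit p) : ¬IsSquare (algebraMap R K p) := by
  rintro ⟨r, hr⟩
  have hint : IsIntegral R (r ^ 2) := by rw [sq, ← hr]; exact isIntegral_algebraMap
  obtain ⟨s, rfl⟩ := IsIntegrallyClosed.exists_algebraMap_eq_of_isIntegral_pow two_pos hint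
  rw [← map_mul] at hr
  have hps : p = s * s := IsFractionRing.injective R K hr
  have hs : IsUnit s := hp s (hps ▸ dvd_rfl)
  exact hu (hps ▸ hs.mul hs)

variable {k : Type*} [Field k]

lemma isCoprime_X_sq_sub_C {a b : k} (hab : a ≠ b) : IsCoprime (X ^ 2 - C a) (X ^ 2 - C b) := by
  simpa using (isCoprime_X_sub_C_of_isUnit_sub (sub_ne_zero.mpr hab).isUnit).map
    (compRingHom (X ^ 2 : k[X]))

lemma squarefree_prod_X_sq_sub_intCast [CharZero k] {J : Finset ℤ} (hJ : 0 ∉ J) :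
    Squarefree (∏ j ∈ J, (X ^ 2 - C (j : k))) := by
  refine Finset.squarefree_prod_of_pairwise_isCoprime (fun i _ j _ hij => ?_) fun j hj => ?_
  · exact (isCoprime_X_sq_sub_C (by exact_mod_cast hij)).isRelPrime
  · exact (separable_X_pow_sub_C _ two_ne_zero
      (by exact_mod_cast ne_of_mem_of_not_mem hj hJ)).squarefree

lemma RatFunc.not_isSquare_prod_X_sq_sub_intCast [CharZero k] {J : Finset ℤ} (hne : J.Nonempty)
    (hJ : 0 ∉ J) :
    ¬IsSquare (∏ j ∈ J, (RatFunc.X ^ 2 - (j : RatFunc k))) := by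
  have hunit : ¬IsUnit (∏ j ∈ J, (Polynomial.X ^ 2 - Polynomial.C (j : k))) := fun hu => by
    obtain ⟨j, hj⟩ := hne
    have := natDegree_eq_zero_of_isUnit (isUnit_of_dvd_unit (Finset.dvd_prod_of_mem _ hj) hu)
    exact two_ne_zero (natDegree_X_pow_sub_C.symm.trans this)
  simpa using not_isSquare_algebraMap_of_squarefree (K := RatFunc k)
    (squarefree_prod_X_sq_sub_intCast hJ) hunit

end

section

open Polynomial

structure PointedCommRing where
  carrier : Type
  [commRing : CommRing carrier]
  pt : carrier

attribute [instance] PointedCommRing.commRing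

namespace PointedCommRing

variable (A B : PointedCommRing)

/-- `A.tower l = A[√(t ^ 2 - n) : n ∈ l]`, where `t` is the point of `A`. Reducible, so that
`rw` sees the ring structure of level `n :: l` as that of `AdjoinSqrt`. -/
abbrev tower : List ℤ → PointedCommRing
  | [] => A
  | n :: l => ⟨AdjoinSqrt ((tower l).pt ^ 2 - n), AdjoinSqrt.of _ (tower l).pt⟩

def towerOf : (l : List ℤ) → A.carrier →+* (A.tower l).carrier
  | [] => RingHom.id _
  | _ :: l => (AdjoinSqrt.of _).comp (towerOf l)

/-- `√(t ^ 2 - i)`, with the junk value `0` when `i ∉ l`. -/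
def sqrt : (l : List ℤ) → ℤ → (A.tower l).carrier
  | [], _ => 0
  | n :: l, i => if i = n then AdjoinSqrt.sqrt _ else AdjoinSqrt.of _ (sqrt l i)

section cons

variable (n : ℤ) (l : List ℤ)

lemma tower_cons_pt :
    (A.tower (n :: l)).pt = AdjoinSqrt.of ((A.tower l).pt ^ 2 - n) (A.tower l).pt :=
  rfl

lemma towerOf_cons_apply (a : A.carrier) :
    A.towerOf (n :: l) a = AdjoinSqrt.of ((A.tower l).pt ^ 2 - n) (A.towerOf l a) :=
  rfl

lemma sqrt_cons_self : A.sqrt (n :: l) n = AdjoinSqrt.sqrt ((A.tower l).pt ^ 2 - n) :=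
  if_pos rfl

lemma sqrt_cons_of_ne {i : ℤ} (hi : i ≠ n) :
    A.sqrt (n :: l) i = AdjoinSqrt.of ((A.tower l).pt ^ 2 - n) (A.sqrt l i) :=
  if_neg hi

end cons

lemma towerOf_pt : ∀ l : List ℤ, A.towerOf l A.pt = (A.tower l).pt
  | [] => rfl
  | n :: l => by rw [towerOf_cons_apply, towerOf_pt l, tower_cons_pt]

instance nontrivial_tower [Nontrivial A.carrier] : ∀ l : List ℤ, Nontrivial (A.tower l).carrier
  | [] => ‹_›
  | n :: l =>
    have := nontrivial_tower l
    inferInstanceAs (Nontrivial (AdjoinSqrt ((A.tower l).pt ^ 2 - n)))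

lemma towerOf_injective [Nontrivial A.carrier] : ∀ l : List ℤ, Function.Injective (A.towerOf l)
  | [] => Function.injective_id
  | n :: l => fun a b hab => towerOf_injective l <| AdjoinSqrt.of_injective _ <| by
      rwa [towerOf_cons_apply, towerOf_cons_apply] at hab

lemma sqrt_sq : ∀ (l : List ℤ) (i : ℤ), i ∈ l → A.sqrt l i ^ 2 = (A.tower l).pt ^ 2 - i
  | n :: l, i, hi => by
    by_cases hin : i = n
    · subst hin
      rw [sqrt_cons_self, AdjoinSqrt.sqrt_sq, tower_cons_pt, map_sub, map_pow, map_intCast]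
    · rw [sqrt_cons_of_ne _ _ _ hin, ← map_pow,
        sqrt_sq l i ((List.mem_cons.mp hi).resolve_left hin), tower_cons_pt, map_sub, map_pow,
        map_intCast]

def towerMap (f : A.carrier →+* B.carrier) (hf : f A.pt = B.pt) :
    (l : List ℤ) →
      {g : (A.tower l).carrier →+* (B.tower l).carrier // g (A.tower l).pt = (B.tower l).pt}
  | [] => ⟨f, hf⟩
  | n :: l =>
    let g := towerMap f hf l
    ⟨AdjoinSqrt.map g.1 (by rw [map_sub, map_pow, g.2, map_intCast]), by
      rw [tower_cons_pt, tower_cons_pt, AdjoinSqrt.map_of, g.2]⟩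

lemma towerMap_injective [Nontrivial B.carrier] (f : A.carrier →+* B.carrier)
    (hf : f A.pt = B.pt) (hinj : Function.Injective f) :
    ∀ l : List ℤ, Function.Injective (A.towerMap B f hf l).1
  | [] => hinj
  | n :: l => by
    have := B.nontrivial_tower l
    rw [towerMap]
    exact AdjoinSqrt.map_injective _ (towerMap_injective f hf hinj l)
      (h := by rw [map_sub, map_pow, (A.towerMap B f hf l).2, map_intCast])

section lift

variable {S : Type*} [CommRing S] (f : A.carrier →+* S) (y : ℤ → S)

lemma eval₂_X_sq_sub_C_eq_zero {n : ℤ} {l : List ℤ} {g : (A.tower l).carrier →+* S}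
    (hg : ∀ a, g (A.towerOf l a) = f a) (hy : y n ^ 2 = f A.pt ^ 2 - n) :
    eval₂ g (y n) (X ^ 2 - C ((A.tower l).pt ^ 2 - n)) = 0 := by
  rw [eval₂_sub, eval₂_X_pow, eval₂_C, map_sub, map_pow, ← A.towerOf_pt, hg, map_intCast, hy,
    sub_self]

def towerLift : (l : List ℤ) → (∀ i ∈ l, y i ^ 2 = f A.pt ^ 2 - i) →
    {g : (A.tower l).carrier →+* S // ∀ a, g (A.towerOf l a) = f a}
  | [], _ => ⟨f, fun _ => rfl⟩
  | n :: l, hy =>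
    let g := towerLift l fun i hi => hy i (List.mem_cons_of_mem _ hi)
    ⟨AdjoinRoot.lift g.1 (y n) (A.eval₂_X_sq_sub_C_eq_zero f y g.2 (hy n List.mem_cons_self)),
      fun a => by rw [towerOf_cons_apply, AdjoinRoot.lift_of, g.2]⟩

lemma towerLift_sqrt :
    ∀ (l : List ℤ) (hy : ∀ i ∈ l, y i ^ 2 = f A.pt ^ 2 - i) (i : ℤ), i ∈ l →
      (A.towerLift f y l hy).1 (A.sqrt l i) = y i
  | n :: l, hy, i, hi => by
    rw [towerLift]
    by_cases hin : i = n
    · subst hin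
      rw [sqrt_cons_self, AdjoinRoot.lift_root]
    · rw [sqrt_cons_of_ne _ _ _ hin, AdjoinRoot.lift_of]
      exact towerLift_sqrt l _ i ((List.mem_cons.mp hi).resolve_left hin)

end lift

variable (k : Type) [Field k] [CharZero k]

abbrev ratFunc : PointedCommRing := ⟨RatFunc k, RatFunc.X⟩

abbrev polynomial : PointedCommRing := ⟨k[X], X⟩

lemma isField_tower_ratFunc : ∀ l : List ℤ, l.Nodup → 0 ∉ l →
    IsField ((ratFunc k).tower l).carrier ∧
      ∀ J : Finset ℤ, J.Nonempty → 0 ∉ J → (∀ j ∈ J, j ∉ l) →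
        ¬IsSquare (∏ j ∈ J, (((ratFunc k).tower l).pt ^ 2 - j))
  | [], _, _ => ⟨Field.toIsField (RatFunc k), fun _ hne h0 _ =>
      RatFunc.not_isSquare_prod_X_sq_sub_intCast hne h0⟩
  | n :: l, hl, h0 => by
    obtain ⟨hnl, hl⟩ := List.nodup_cons.mp hl
    have hn0 : n ≠ 0 := fun h => h0 (h ▸ List.mem_cons_self)
    obtain ⟨hF, hsq⟩ := isField_tower_ratFunc l hl fun h => h0 (List.mem_cons_of_mem _ h)
    let := hF.toField
    have := charZero_of_injective_ringHom ((ratFunc k).towerOf_injective l)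
    set t := ((ratFunc k).tower l).pt
    have hn : ¬IsSquare (t ^ 2 - n) := by
      simpa using hsq {n} (Finset.singleton_nonempty n)
        (by simpa using hn0.symm) (by simpa using hnl)
    refine ⟨AdjoinSqrt.isField_of_not_isSquare hn, fun J hne hJ0 hJ hJsq => ?_⟩
    have hnJ : n ∉ J := fun h => hJ n h List.mem_cons_self
    have hJl : ∀ j ∈ J, j ∉ l := fun j hj h => hJ j hj (List.mem_cons_of_mem _ h)
    have hof : ∏ j ∈ J, (((ratFunc k).tower (n :: l)).pt ^ 2 - j) =
        AdjoinSqrt.of (t ^ 2 - n) (∏ j ∈ J, (t ^ 2 - j)) := by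
      simp only [map_prod, map_sub, map_pow, map_intCast, t]
    rw [hof] at hJsq
    rcases AdjoinSqrt.isSquare_or_isSquare_mul_of_isSquare_of hJsq with h | h
    · exact hsq J hne hJ0 hJl h
    · refine hsq (insert n J) (Finset.insert_nonempty n J) ?_ ?_
        (by rwa [Finset.prod_insert hnJ, mul_comm])
      · simp [hn0.symm, hJ0]
      · exact Finset.forall_mem_insert .. |>.mpr ⟨hnl, hJl⟩

lemma isDomain_tower_polynomial {l : List ℤ} (hl : l.Nodup) (h0 : 0 ∉ l) :
    IsDomain ((polynomial k).tower l).carrier :=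
  let := (isField_tower_ratFunc k l hl h0).1.toField
  ((polynomial k).towerMap_injective (ratFunc k) (algebraMap k[X] (RatFunc k))
    RatFunc.algebraMap_X (IsFractionRing.injective _ _) l).isDomain

end PointedCommRing

end

lemma Ideal.isPrime_of_forall_mem_exists_isPrime_le {R : Type*} [CommSemiring R] {I : Ideal R}
    (h : ∀ a ∈ I, ∃ P : Ideal R, P.IsPrime ∧ a ∈ P ∧ P ≤ I) : I.IsPrime := by
  refine ⟨fun htop => ?_, fun {a b} hab => ?_⟩
  · obtain ⟨P, hP, h1, -⟩ := h 1 (htop ▸ Submodule.mem_top)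
    exact hP.ne_top ((P.eq_top_iff_one).mpr h1)
  · obtain ⟨P, hP, hab, hPI⟩ := h _ hab
    exact (hP.mem_or_mem hab).imp (@hPI a) (@hPI b)

namespace WeylC

open MvPolynomial PointedCommRing

variable (k : Type) [Field k]

def rel (m n : ℤ) : MvPolynomial ℤ k :=
  X n ^ 2 + (n : MvPolynomial ℤ k) - X m ^ 2 - (m : MvPolynomial ℤ k)

def finiteIdeal (l : List ℤ) : Ideal (MvPolynomial ℤ k) :=
  Ideal.span {p | ∃ n ∈ l, p = rel k 0 n}

lemma finiteIdeal_le_span_rel (l : List ℤ) :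
    finiteIdeal k l ≤ Ideal.span {p | ∃ m n : ℤ, p = rel k m n} :=
  Ideal.span_mono fun _ ⟨n, _, hp⟩ => ⟨0, n, hp⟩

lemma exists_mem_finiteIdeal {p : MvPolynomial ℤ k}
    (hp : p ∈ Ideal.span {p | ∃ m n : ℤ, p = rel k m n}) :
    ∃ l : List ℤ, l.Nodup ∧ 0 ∉ l ∧ p ∈ finiteIdeal k l := by
  classical
  have hle :
      Ideal.span {p | ∃ m n : ℤ, p = rel k m n} ≤ Submodule.span _ (Set.range (rel k 0)) :=
    Ideal.span_le.mpr fun _ ⟨m, n, hp⟩ => by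
      rw [hp, show rel k m n = rel k 0 n - rel k 0 m by simp only [rel]; ring]
      exact sub_mem (Submodule.subset_span ⟨n, rfl⟩) (Submodule.subset_span ⟨m, rfl⟩)
  obtain ⟨c, rfl⟩ := Finsupp.mem_span_range_iff_exists_finsupp.mp (hle hp)
  refine ⟨(c.support.erase 0).toList, Finset.nodup_toList _, by simp,
    Ideal.sum_mem _ fun i hi => ?_⟩
  by_cases hi0 : i = 0
  · simp [hi0, rel]
  · exact Ideal.mul_mem_left _ _ (Ideal.subset_span ⟨i, by simp [hi0, hi], rfl⟩)

variable (l : List ℤ)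

lemma mk_X_sq {i : ℤ} (hi : i ∈ l) :
    Ideal.Quotient.mk (finiteIdeal k l) (X i) ^ 2 =
      Ideal.Quotient.mk (finiteIdeal k l) (X 0) ^ 2 - i := by
  have hrel : rel k 0 i ∈ finiteIdeal k l := Ideal.subset_span ⟨i, hi, rfl⟩
  have := Ideal.Quotient.eq_zero_iff_mem.mpr hrel
  simp only [rel, map_sub, map_add, map_pow, map_intCast, Int.cast_zero, sub_zero] at this
  linear_combination this

def toTower : MvPolynomial ℤ k →+* MvPolynomial ℤ ((polynomial k).tower l).carrier :=
  eval₂Hom (C.comp (((polynomial k).towerOf l).comp Polynomial.C)) fun i =>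
    if i = 0 then C ((polynomial k).tower l).pt
    else if i ∈ l then C ((polynomial k).sqrt l i) else X i

def ofTower :
    MvPolynomial ℤ ((polynomial k).tower l).carrier →+* MvPolynomial ℤ k ⧸ finiteIdeal k l :=
  eval₂Hom ((polynomial k).towerLift
      (Polynomial.eval₂RingHom ((Ideal.Quotient.mk _).comp C) (Ideal.Quotient.mk _ (X 0)))
      (fun i => Ideal.Quotient.mk _ (X i)) l
      fun i hi => by rw [mk_X_sq k l hi, Polynomial.coe_eval₂RingHom, Polynomial.eval₂_X]).1
    fun i => Ideal.Quotient.mk _ (X i)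

lemma finiteIdeal_le_ker_toTower : finiteIdeal k l ≤ RingHom.ker (toTower k l) := by
  refine Ideal.span_le.mpr fun _ ⟨n, hn, hp⟩ => ?_
  rw [hp, SetLike.mem_coe, RingHom.mem_ker]
  by_cases hn0 : n = 0
  · simp [hn0, rel]
  · simp only [rel, toTower, map_sub, map_add, map_pow, map_intCast, eval₂Hom_X', if_neg hn0,
      if_pos hn, Int.cast_zero, sub_zero]
    rw [← map_pow, (polynomial k).sqrt_sq l n hn]
    simp

lemma ofTower_comp_toTower : (ofTower k l).comp (toTower k l) = Ideal.Quotient.mk _ := by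
  refine MvPolynomial.ringHom_ext (fun a => ?_) fun i => ?_
  · simp [toTower, ofTower, (PointedCommRing.towerLift _ _ _ _ _).2]
  · simp only [RingHom.comp_apply, toTower, eval₂Hom_X']
    split_ifs with hi0 hil
    · rw [hi0, ofTower, eval₂Hom_C, ← towerOf_pt, (towerLift _ _ _ _ _).2]
      exact Polynomial.eval₂_X _ _
    · rw [ofTower, eval₂Hom_C, towerLift_sqrt _ _ _ _ _ _ hil]
    · rw [ofTower, eval₂Hom_X']

variable [CharZero k]

lemma isPrime_finiteIdeal {l : List ℤ} (hl : l.Nodup) (h0 : 0 ∉ l) :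
    (finiteIdeal k l).IsPrime := by
  have := isDomain_tower_polynomial k hl h0
  have hinj : Function.Injective (Ideal.Quotient.lift _ _ (finiteIdeal_le_ker_toTower k l)) :=
    Function.LeftInverse.injective (g := ofTower k l) fun q => by
      obtain ⟨p, rfl⟩ := Ideal.Quotient.mk_surjective q
      exact RingHom.congr_fun (ofTower_comp_toTower k l) p
  exact (Ideal.Quotient.isDomain_iff_prime _).mp hinj.isDomain

end WeylC

end

open scoped symmDiff

noncomputable section

variable (k : Type) [Field k]

variable [CharZero k]

/-- `C = k[x_n : n ∈ ℤ]/(x_n² + n = x_m² + m)` is an integral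
domain. -/
theorem weylC_isDomain : IsDomain (WeylC k) :=
  (Ideal.Quotient.isDomain_iff_prime _).mpr <|
    Ideal.isPrime_of_forall_mem_exists_isPrime_le fun _ hp =>
      let ⟨l, hl, h0, hpl⟩ := WeylC.exists_mem_finiteIdeal k hp
      ⟨_, WeylC.isPrime_finiteIdeal k hl h0, hpl, WeylC.finiteIdeal_le_span_rel k l⟩
end
end

section
/- The field of fractions of C has transcendence degree one over k; in fact x_0 is a transcendence basis. -/
/-! Sending `x_n` to a square root of `X - n` in an algebraic closure of `k(X)` respects the
relations of `C` and sends `x_0` to a square root of the transcendental `X`, so `x_0` is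
transcendental over `k`. On the other hand `x_n² = x_0² - n`, so every generator of `C`, hence
all of `C`, is integral over `k[x_0]`. -/

open scoped symmDiff

noncomputable section

variable (k : Type) [Field k]

theorem xC_sq_add_intCast (m n : ℤ) : xC k n ^ 2 + n = xC k m ^ 2 + m := by
  have hrel : (Ideal.Quotient.mk _ (MvPolynomial.X n ^ 2 + (n : MvPolynomial ℤ k)
      - MvPolynomial.X m ^ 2 - (m : MvPolynomial ℤ k)) : WeylC k) = 0 :=
    Ideal.Quotient.eq_zero_iff_mem.mpr (Ideal.subset_span ⟨m, n, rfl⟩)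
  simp only [map_sub, map_add, map_pow, map_intCast, sub_sub] at hrel
  exact sub_eq_zero.mp hrel

theorem adjoin_range_xC : Algebra.adjoin k (Set.range (xC k)) = ⊤ := by
  rw [Algebra.adjoin_range_eq_range_aeval, AlgHom.range_eq_top]
  have : MvPolynomial.aeval (xC k) = Ideal.Quotient.mkₐ k _ :=
    MvPolynomial.algHom_ext fun n => by simp [xC]
  exact this ▸ Ideal.Quotient.mkₐ_surjective k _

theorem Algebra.IsIntegral.of_adjoin_range_eq_top {R A ι : Type*} [CommRing R] [CommRing A]
    [Algebra R A] (B : Subalgebra R A) {f : ι → A} (hf : Algebra.adjoin R (Set.range f) = ⊤)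
    (hint : ∀ i, IsIntegral B (f i)) : Algebra.IsIntegral B A := by
  refine integralClosure_eq_top_iff.mp (Subalgebra.restrictScalars_injective R ?_)
  rw [Subalgebra.restrictScalars_top, ← top_le_iff, ← hf]
  exact Algebra.adjoin_le (Set.range_subset_iff.mpr hint)

theorem isIntegral_adjoin_xC_zero :
    Algebra.IsIntegral (Algebra.adjoin k {xC k 0}) (WeylC k) := by
  refine Algebra.IsIntegral.of_adjoin_range_eq_top _ (adjoin_range_xC k) fun n => ?_
  have hsq : xC k n ^ 2 ∈ Algebra.adjoin k {xC k 0} := by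
    rw [eq_sub_of_add_eq (xC_sq_add_intCast k 0 n), Int.cast_zero, add_zero]
    exact sub_mem (pow_mem (Algebra.self_mem_adjoin_singleton k _) 2) (intCast_mem _ n)
  exact IsIntegral.of_pow two_pos
    (isIntegral_algebraMap (A := WeylC k) (x := (⟨_, hsq⟩ : Algebra.adjoin k {xC k 0})))

section Lift

variable {A : Type*} [CommRing A] [Algebra k A] (y : ℤ → A)
  (hy : ∀ m n : ℤ, y n ^ 2 + n = y m ^ 2 + m)

def WeylC.lift_s10 : WeylC k →ₐ[k] A :=
  Ideal.Quotient.liftₐ _ (MvPolynomial.aeval y) fun _ ha => by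
    refine (Ideal.span_le (I := RingHom.ker (MvPolynomial.aeval y))).mpr ?_ ha
    rintro _ ⟨m, n, rfl⟩
    simp [hy m n]

theorem WeylC.lift_xC_s10 (n : ℤ) : WeylC.lift_s10 k y hy (xC k n) = y n :=
  MvPolynomial.aeval_X y n

end Lift

/-- Witness: `x_n ↦ √(X - n)` in an algebraic closure of `k(X)`. -/
theorem exists_algHom_transcendental_xC_zero :
    ∃ f : WeylC k →ₐ[k] AlgebraicClosure (RatFunc k), Transcendental k (f (xC k 0)) := by
  set t : AlgebraicClosure (RatFunc k) := algebraMap (RatFunc k) _ RatFunc.X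
  choose y hy using fun n : ℤ => IsAlgClosed.exists_pow_nat_eq (t - n) two_pos
  have ht : Transcendental k t :=
    (transcendental_algebraMap_iff (algebraMap (RatFunc k) _).injective).mpr
      RatFunc.transcendental_X
  refine ⟨WeylC.lift_s10 k y fun m n => by simp [hy], ?_⟩
  rw [WeylC.lift_xC_s10]
  intro h
  exact ht (by simpa [hy] using h.pow 2)

variable [CharZero k]

/-- The fraction field of `C` has transcendence degree one over
`k`; in fact `x_0` is a transcendence basis for `C` over `k`. -/
theorem x0_isTranscendenceBasis :
    IsTranscendenceBasis k (fun _ : Unit => xC k 0) := by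
  obtain ⟨f, hf⟩ := exists_algHom_transcendental_xC_zero k
  have : Nontrivial (WeylC k) := f.toRingHom.domain_nontrivial
  have : Algebra.IsIntegral (Algebra.adjoin k {xC k 0}) (WeylC k) := isIntegral_adjoin_xC_zero k
  refine isTranscendenceBasis_iff_algebraicIndependent_isAlgebraic.mpr
    ⟨algebraicIndependent_unique_type_iff.mpr fun h => hf (h.algHom f), ?_⟩
  rw [Set.range_const]
  infer_instance

end
end

section
/- There is a well-defined almost-automorphism φ of the ℤ_fin-graded ring C determined by φ(a x_J) = φ(a) x_{−J} for a ∈ k[z] (where z = x_0² and φ(z) = −z): for homogeneous c ∈ C_I and d ∈ C_J one has φ(cd) = (−1)^{|I∩J|} φ(c) φ(d), and moreover φ(x_n²) = −x_{−n}² for all n and φ² = id_C. -/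
/-!
The map `φ` comes from the `k`-linear map on `k[x_n : n ∈ ℤ]` sending the monomial `x^e` to
`(-1)^(∑ₙ ⌊eₙ/2⌋) x^(-e)`, where `x^(-e)` renames every `x_n` to `x_{-n}`. Multiplying a monomial
by a square `x_n²` raises `∑ₙ ⌊eₙ/2⌋` by one, so this map sends `x_n² · r` to `-x_{-n}² · φ(r)`
and a constant multiple of `r` to the same multiple of `φ(r)`. Hence it maps
`r · (x_n² + n - x_m² - m)` to `-φ(r) · (x_{-n}² - n - x_{-m}² + m)`, it preserves the defining
ideal of `C`, and `φ(z) = -z`. Squarefree monomials `x_I` are fixed by the sign, and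
`x_I x_J = x_{I ∆ J} ∏_{i ∈ I ∩ J} x_i²` accounts for the cocycle `(-1)^|I ∩ J|`.
-/

open scoped symmDiff

noncomputable section

variable (k : Type) [Field k]

/-- Negation of a finite set of integers. -/
def negSet (J : Finset ℤ) : Finset ℤ := J.image (fun j => -j)

theorem Finset.prod_mul_prod_eq_prod_symmDiff_mul_prod_inter_sq {ι M : Type*} [CommMonoid M]
    [DecidableEq ι] (s t : Finset ι) (f : ι → M) :
    (∏ i ∈ s, f i) * ∏ i ∈ t, f i = (∏ i ∈ s ∆ t, f i) * ∏ i ∈ s ∩ t, f i ^ 2 := by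
  rw [← prod_union_inter, ← sup_eq_union, ← symmDiff_sup_inf s t, sup_eq_union,
    prod_union (disjoint_symmDiff_inf s t), inf_eq_inter, mul_assoc, ← prod_mul_distrib]
  simp only [sq]

theorem Polynomial.map_aeval_mul_of_map_mul {R A B : Type*} [CommSemiring R] [CommSemiring A]
    [Algebra R A] [CommSemiring B] [Algebra R B] (f : A →ₗ[R] B) {u : A} {v : B}
    (h : ∀ p, f (u * p) = v * f p) (q : Polynomial R) (p : A) :
    f (aeval u q * p) = aeval v q * f p := by
  induction q using Polynomial.induction_on generalizing p with
  | C a => simp only [aeval_C, ← Algebra.smul_def, map_smul]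
  | add q r hq hr => simp only [map_add, add_mul, hq, hr]
  | monomial n a ih =>
    have hu : aeval u (C a * X ^ (n + 1)) = aeval u (C a * X ^ n) * u := by
      rw [pow_succ, ← mul_assoc, map_mul, aeval_X]
    have hv : aeval v (C a * X ^ (n + 1)) = aeval v (C a * X ^ n) * v := by
      rw [pow_succ, ← mul_assoc, map_mul, aeval_X]
    rw [hu, hv, mul_assoc, ih, h, mul_assoc]

theorem Ideal.map_mem_of_forall_mul_mem {A B : Type*} [CommSemiring A] [Semiring B]
    (f : A →+ B) {S : Set A} {J : Ideal B} (h : ∀ r, ∀ s ∈ S, f (r * s) ∈ J) {x : A}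
    (hx : x ∈ Ideal.span S) : f x ∈ J := by
  suffices ∀ r, f (r * x) ∈ J by simpa using this 1
  induction hx using Submodule.span_induction with
  | mem s hs => exact fun r => h r s hs
  | zero => simp
  | add x y _ _ hx hy => exact fun r => by simpa [mul_add] using add_mem (hx r) (hy r)
  | smul c x _ hx => exact fun r => by simpa [mul_assoc] using hx (r * c)

def Ideal.quotientLinearEquivOfInvolutive {R A : Type*} [CommRing R] [CommRing A] [Algebra R A]
    (I : Ideal A) (f : A →ₗ[R] A) (hf : Function.Involutive f) (hI : ∀ x ∈ I, f x ∈ I) :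
    (A ⧸ I) ≃ₗ[R] A ⧸ I :=
  (Submodule.Quotient.restrictScalarsEquiv R I).symm ≪≫ₗ
    Submodule.Quotient.equiv (I.restrictScalars R) (I.restrictScalars R)
      (LinearEquiv.ofInvolutive f hf)
      (le_antisymm (Submodule.map_le_iff_le_comap.2 fun x hx => hI x hx)
        fun x hx => ⟨f x, hI x hx, hf x⟩) ≪≫ₗ
    Submodule.Quotient.restrictScalarsEquiv R I

section

variable {R A : Type*} [CommRing R] [CommRing A] [Algebra R A] (I : Ideal A) (f : A →ₗ[R] A)
  (hf : Function.Involutive f) (hI : ∀ x ∈ I, f x ∈ I)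

theorem Ideal.quotientLinearEquivOfInvolutive_mk (a : A) :
    I.quotientLinearEquivOfInvolutive f hf hI (Ideal.Quotient.mk I a)
      = Ideal.Quotient.mk I (f a) :=
  rfl

theorem Ideal.quotientLinearEquivOfInvolutive_involutive :
    Function.Involutive (I.quotientLinearEquivOfInvolutive f hf hI) := by
  intro c
  obtain ⟨a, rfl⟩ := Ideal.Quotient.mk_surjective c
  rw [quotientLinearEquivOfInvolutive_mk, quotientLinearEquivOfInvolutive_mk, hf a]

end

namespace MvPolynomial

variable {R σ : Type*} [CommRing R]

def halfDegree (e : σ →₀ ℕ) : ℕ := e.sum fun _ a => a / 2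

theorem halfDegree_add_single_two (e : σ →₀ ℕ) (i : σ) :
    halfDegree (e + Finsupp.single i 2) = halfDegree e + 1 := by
  classical
  have hsupport : (e + Finsupp.single i 2).support ⊆ insert i e.support :=
    Finsupp.support_add.trans (Finset.union_subset (Finset.subset_insert _ _)
      (Finsupp.support_single_subset.trans (by simp)))
  have hhalf (n : σ) :
      (e + Finsupp.single i 2 : σ →₀ ℕ) n / 2 = e n / 2 + if i = n then 1 else 0 := by
    rw [Finsupp.add_apply, Finsupp.single_apply]
    split_ifs <;> omega
  rw [halfDegree, halfDegree, Finsupp.sum_of_support_subset _ hsupport _ (by simp),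
    Finsupp.sum_of_support_subset e (Finset.subset_insert i _) _ (by simp)]
  simp only [hhalf, Finset.sum_add_distrib, Finset.sum_ite_eq, Finset.mem_insert_self, if_true]

theorem halfDegree_mapDomain {τ : Type*} {f : σ → τ} (hf : f.Injective) (e : σ →₀ ℕ) :
    halfDegree (e.mapDomain f) = halfDegree e :=
  Finsupp.sum_mapDomain_index_inj hf

theorem halfDegree_sum_single_one (s : Finset σ) :
    halfDegree (∑ i ∈ s, Finsupp.single i 1) = 0 := by
  classical
  refine Finset.sum_eq_zero fun i _ => Nat.div_eq_of_lt ?_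
  rw [Finsupp.finsetSum_apply]
  simp only [Finsupp.single_apply, Finset.sum_ite_eq']
  split_ifs <;> omega

variable (R σ) in
def signTwist : MvPolynomial σ R →ₗ[R] MvPolynomial σ R :=
  (basisMonomials σ R).constr R fun e => monomial e ((-1) ^ halfDegree e)

theorem signTwist_monomial (e : σ →₀ ℕ) (c : R) :
    signTwist R σ (monomial e c) = monomial e ((-1) ^ halfDegree e * c) := by
  have hbasis : monomial e c = c • basisMonomials σ R e := by
    rw [coe_basisMonomials, smul_monomial, smul_eq_mul, mul_one]
  rw [hbasis, map_smul, signTwist, Module.Basis.constr_basis, smul_monomial, smul_eq_mul,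
    mul_comm]

theorem signTwist_involutive : Function.Involutive (signTwist R σ) := by
  intro p
  induction p using MvPolynomial.induction_on' with
  | monomial e c =>
    rw [signTwist_monomial, signTwist_monomial, ← mul_assoc, ← pow_add,
      (Even.add_self _).neg_one_pow, one_mul]
  | add p q hp hq => rw [map_add, map_add, hp, hq]

theorem signTwist_rename {τ : Type*} {f : σ → τ} (hf : f.Injective) (p : MvPolynomial σ R) :
    signTwist R τ (rename f p) = rename f (signTwist R σ p) := by
  induction p using MvPolynomial.induction_on' with
  | monomial e c =>
    rw [rename_monomial, signTwist_monomial, signTwist_monomial, rename_monomial,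
      halfDegree_mapDomain hf]
  | add p q hp hq => rw [map_add, map_add, hp, hq, map_add, map_add]

theorem signTwist_X_sq_mul (i : σ) (p : MvPolynomial σ R) :
    signTwist R σ (X i ^ 2 * p) = -(X i ^ 2) * signTwist R σ p := by
  induction p using MvPolynomial.induction_on' with
  | monomial e c =>
    rw [X_pow_eq_monomial, monomial_mul, signTwist_monomial, signTwist_monomial, neg_mul,
      monomial_mul, add_comm, halfDegree_add_single_two, pow_succ, ← map_neg]
    congr 1
    ring
  | add p q hp hq => rw [mul_add, map_add, hp, hq, map_add, mul_add]

theorem signTwist_aeval_X_sq_mul (i : σ) (q : Polynomial R) (p : MvPolynomial σ R) :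
    signTwist R σ (Polynomial.aeval (X i ^ 2) q * p)
      = Polynomial.aeval (-(X i ^ 2)) q * signTwist R σ p :=
  Polynomial.map_aeval_mul_of_map_mul _ (signTwist_X_sq_mul i) q p

theorem signTwist_prod_X_sq_mul (s : Finset σ) (p : MvPolynomial σ R) :
    signTwist R σ ((∏ i ∈ s, X i ^ 2) * p)
      = (-1) ^ s.card * ((∏ i ∈ s, X i ^ 2) * signTwist R σ p) := by
  classical
  induction s using Finset.induction_on generalizing p with
  | empty => simp
  | insert a s ha ih =>
    rw [Finset.prod_insert ha, Finset.card_insert_of_notMem ha, mul_assoc, signTwist_X_sq_mul,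
      ih]
    ring

theorem signTwist_prod_X (s : Finset σ) : signTwist R σ (∏ i ∈ s, X i) = ∏ i ∈ s, X i := by
  have hmonomial :
      ∏ i ∈ s, (X i : MvPolynomial σ R) = monomial (∑ i ∈ s, Finsupp.single i 1) 1 :=
    (monomial_sum_one s _).symm
  rw [hmonomial, signTwist_monomial, halfDegree_sum_single_one, pow_zero, one_mul]

theorem signTwist_one : signTwist R σ 1 = 1 := by
  simpa using signTwist_prod_X (R := R) (∅ : Finset σ)

theorem signTwist_prod_X_mul_prod_X [DecidableEq σ] (s t : Finset σ) :
    signTwist R σ ((∏ i ∈ s, X i) * ∏ i ∈ t, X i)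
      = (-1) ^ (s ∩ t).card * ((∏ i ∈ s, X i) * ∏ i ∈ t, X i) := by
  rw [Finset.prod_mul_prod_eq_prod_symmDiff_mul_prod_inter_sq, mul_comm,
    signTwist_prod_X_sq_mul, signTwist_prod_X]

theorem signTwist_aeval_mul_prod_X (i : σ) (q : Polynomial R) (s : Finset σ) :
    signTwist R σ (Polynomial.aeval (X i ^ 2) q * ∏ j ∈ s, X j)
      = Polynomial.aeval (-(X i ^ 2)) q * ∏ j ∈ s, X j := by
  rw [signTwist_aeval_X_sq_mul, signTwist_prod_X]

theorem signTwist_aeval_mul_prod_X_mul_aeval_mul_prod_X [DecidableEq σ] (i : σ)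
    (q r : Polynomial R) (s t : Finset σ) :
    signTwist R σ ((Polynomial.aeval (X i ^ 2) q * ∏ j ∈ s, X j)
        * (Polynomial.aeval (X i ^ 2) r * ∏ j ∈ t, X j))
      = (-1) ^ (s ∩ t).card * (signTwist R σ (Polynomial.aeval (X i ^ 2) q * ∏ j ∈ s, X j)
          * signTwist R σ (Polynomial.aeval (X i ^ 2) r * ∏ j ∈ t, X j)) := by
  have hprod : (Polynomial.aeval (X i ^ 2 : MvPolynomial σ R) q * ∏ j ∈ s, X j)
        * (Polynomial.aeval (X i ^ 2) r * ∏ j ∈ t, X j)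
      = Polynomial.aeval (X i ^ 2) (q * r) * ((∏ j ∈ s, X j) * ∏ j ∈ t, X j) := by
    rw [map_mul]; ring
  rw [hprod, signTwist_aeval_X_sq_mul, signTwist_prod_X_mul_prod_X, signTwist_aeval_mul_prod_X,
    signTwist_aeval_mul_prod_X, map_mul]
  ring

end MvPolynomial

open MvPolynomial

namespace WeylC

abbrev relations : Set (MvPolynomial ℤ k) := { p : MvPolynomial ℤ k |
    ∃ m n : ℤ, p = MvPolynomial.X n ^ 2 + (n : MvPolynomial ℤ k)
      - MvPolynomial.X m ^ 2 - (m : MvPolynomial ℤ k) }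

def negTwist : MvPolynomial ℤ k →ₗ[k] MvPolynomial ℤ k :=
  (rename Neg.neg).toLinearMap ∘ₗ signTwist k ℤ

theorem negTwist_apply (p : MvPolynomial ℤ k) :
    negTwist k p = rename Neg.neg (signTwist k ℤ p) :=
  rfl

theorem negTwist_involutive : Function.Involutive (negTwist k) := by
  intro p
  rw [negTwist_apply, negTwist_apply, signTwist_rename neg_injective, rename_rename,
    signTwist_involutive]
  simp

theorem negTwist_mul_relation (r : MvPolynomial ℤ k) (m n : ℤ) :
    negTwist k (r * (X n ^ 2 + (n : MvPolynomial ℤ k) - X m ^ 2 - (m : MvPolynomial ℤ k)))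
      = -(negTwist k r * (X (-n) ^ 2 + ((-n : ℤ) : MvPolynomial ℤ k)
          - X (-m) ^ 2 - ((-m : ℤ) : MvPolynomial ℤ k))) := by
  have hexpand : r * (X n ^ 2 + (n : MvPolynomial ℤ k) - X m ^ 2 - (m : MvPolynomial ℤ k))
      = X n ^ 2 * r - X m ^ 2 * r + (n - m) • r := by
    rw [zsmul_eq_mul]; push_cast; ring
  simp only [hexpand, negTwist_apply, map_add, map_sub, map_zsmul, signTwist_X_sq_mul]
  simp only [map_mul, map_neg, map_pow, rename_X, zsmul_eq_mul]
  push_cast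
  ring

theorem negTwist_mem {x : MvPolynomial ℤ k} (hx : x ∈ Ideal.span (relations k)) :
    negTwist k x ∈ Ideal.span (relations k) := by
  refine Ideal.map_mem_of_forall_mul_mem (negTwist k).toAddMonoidHom ?_ hx
  rintro r _ ⟨m, n, rfl⟩
  rw [LinearMap.toAddMonoidHom_coe, negTwist_mul_relation]
  exact neg_mem (Ideal.mul_mem_left _ _ (Ideal.subset_span ⟨-m, -n, rfl⟩))

theorem negTwist_aeval_mul_prod_X (q : Polynomial k) (J : Finset ℤ) :
    negTwist k (Polynomial.aeval (X 0 ^ 2) q * ∏ j ∈ J, X j)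
      = Polynomial.aeval (-(X 0 ^ 2)) q * ∏ j ∈ negSet J, X j := by
  rw [negTwist_apply, signTwist_aeval_mul_prod_X, map_mul, ← Polynomial.aeval_algHom_apply,
    map_prod, negSet, Finset.prod_image fun _ _ _ _ h => neg_injective h]
  simp

def phi : WeylC k ≃ₗ[k] WeylC k :=
  (Ideal.span (relations k)).quotientLinearEquivOfInvolutive (negTwist k) (negTwist_involutive k)
    fun _ => negTwist_mem k

theorem phi_mk (p : MvPolynomial ℤ k) :
    phi k (Ideal.Quotient.mk _ p) = Ideal.Quotient.mk _ (negTwist k p) :=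
  rfl

theorem mk_prod_X (I : Finset ℤ) :
    Ideal.Quotient.mk (Ideal.span (relations k)) (∏ i ∈ I, X i) = xS k I :=
  map_prod _ _ _

theorem exists_eq_mk_of_mem_Cphi {a : WeylC k} (ha : a ∈ Cphi k) :
    ∃ q : Polynomial k, a = Ideal.Quotient.mk _ (Polynomial.aeval (X 0 ^ 2) q) := by
  rw [Cphi, Algebra.adjoin_singleton_eq_range_aeval, AlgHom.mem_range] at ha
  obtain ⟨q, rfl⟩ := ha
  refine ⟨q, ?_⟩
  rw [← Ideal.Quotient.mkₐ_eq_mk k, ← Polynomial.aeval_algHom_apply, map_pow]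
  rfl

theorem exists_eq_mk_of_mem_Cgrade {I : Finset ℤ} {c : WeylC k} (hc : c ∈ Cgrade k I) :
    ∃ q : Polynomial k,
      c = Ideal.Quotient.mk _ (Polynomial.aeval (X 0 ^ 2) q * ∏ i ∈ I, X i) := by
  obtain ⟨a, ha, rfl⟩ := hc
  obtain ⟨q, rfl⟩ := exists_eq_mk_of_mem_Cphi k ha
  exact ⟨q, by rw [LinearMap.mulRight_apply, map_mul, mk_prod_X]⟩

theorem phi_xC_sq (n : ℤ) : phi k (xC k n ^ 2) = -(xC k (-n) ^ 2) := by
  have hpoly : negTwist k (X n ^ 2) = -(X (-n) ^ 2) := by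
    rw [negTwist_apply, ← mul_one (X n ^ 2), signTwist_X_sq_mul, signTwist_one]
    simp
  rw [xC, ← map_pow, phi_mk, hpoly, map_neg, map_pow]
  rfl

theorem phi_mul_xS {a : WeylC k} (ha : a ∈ Cphi k) (J : Finset ℤ) :
    phi k (a * xS k J) = phi k a * xS k (negSet J) := by
  obtain ⟨q, rfl⟩ := exists_eq_mk_of_mem_Cphi k ha
  have hconst := negTwist_aeval_mul_prod_X k q ∅
  simp only [Finset.prod_empty, mul_one, negSet, Finset.image_empty] at hconst
  rw [← mk_prod_X, ← mk_prod_X, ← map_mul, phi_mk, phi_mk, negTwist_aeval_mul_prod_X, hconst,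
    map_mul]

theorem phi_mul_of_mem_Cgrade {I J : Finset ℤ} {c d : WeylC k} (hc : c ∈ Cgrade k I)
    (hd : d ∈ Cgrade k J) : phi k (c * d) = (-1) ^ (I ∩ J).card * (phi k c * phi k d) := by
  obtain ⟨q, rfl⟩ := exists_eq_mk_of_mem_Cgrade k hc
  obtain ⟨r, rfl⟩ := exists_eq_mk_of_mem_Cgrade k hd
  rw [← map_mul, phi_mk, phi_mk, phi_mk, negTwist_apply, negTwist_apply, negTwist_apply,
    signTwist_aeval_mul_prod_X_mul_aeval_mul_prod_X]
  simp only [map_mul, map_pow, map_neg, map_one]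

theorem phi_phi (c : WeylC k) : phi k (phi k c) = c :=
  Ideal.quotientLinearEquivOfInvolutive_involutive _ _ _ _ c

end WeylC

variable [CharZero k]

/-- There is a well-defined almost-automorphism `φ` of the
`ℤ_fin`-graded ring `C`: a `k`-linear bijection with `φ(z) = −z` (where
`z = x_0²`), `φ(a x_J) = φ(a) x_{−J}` for `a ∈ C_∅ = k[z]`, satisfying
`φ(cd) = (−1)^{|I∩J|} φ(c) φ(d)` for homogeneous `c ∈ C_I`, `d ∈ C_J`,
with `φ(x_n²) = −x_{−n}²` for all `n`, and `φ² = id`. -/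
theorem exists_almost_automorphism_phi :
    ∃ φ : WeylC k ≃ₗ[k] WeylC k,
      φ (xC k 0 ^ 2) = -(xC k 0 ^ 2) ∧
      (∀ a ∈ Cphi k, ∀ J : Finset ℤ, φ (a * xS k J) = φ a * xS k (negSet J)) ∧
      (∀ (I J : Finset ℤ) (c d : WeylC k), c ∈ Cgrade k I → d ∈ Cgrade k J →
        φ (c * d) = (-1 : WeylC k) ^ ((I ∩ J).card) * (φ c * φ d)) ∧
      (∀ n : ℤ, φ (xC k n ^ 2) = -(xC k (-n) ^ 2)) ∧
      (∀ c : WeylC k, φ (φ c) = c) :=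
  ⟨WeylC.phi k, by simpa using WeylC.phi_xC_sq k 0, fun _ ha J => WeylC.phi_mul_xS k ha J,
    fun _ _ _ _ hc hd => WeylC.phi_mul_of_mem_Cgrade k hc hd, WeylC.phi_xC_sq k, WeylC.phi_phi k⟩
end
end
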